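/- arXiv:2311.13154 — 4 statements merged into one kernel-verified Lean document; each statement's English description precedes it below -/
import Mathlib

section
/- Let D be any Borel probability measure on ℝ^d and let x, y be independent random points each distributed according to D. Then E_{x,y∼D}[ D(R_{x,y}) ] ≥ β_d, where β_d = (2^(2^(d−1)) + 1)^(−3). -/
open MeasureTheory
open scoped ENNReal

/-- The axis-aligned rectangle `R_{x,y}` spanned by the points `x, y ∈ ℝ^d`. -/
def rectOf {d : ℕ} (x y : Fin d → ℝ) : Set (Fin d → ℝ) :=
  {z | ∀ i, min (x i) (y i) ≤ z i ∧ z i ≤ max (x i) (y i)}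

open Classical in
noncomputable def chainLen (r : ℕ → ℕ → Prop) : ℕ → ℕ := fun i =>
  1 + ((Finset.range i).attach.filter (fun j => r j.1 i)).sup fun j => chainLen r j.1
termination_by i => i
decreasing_by exact Finset.mem_range.mp j.2

lemma chainLen_pos (r : ℕ → ℕ → Prop) (i : ℕ) : 1 ≤ chainLen r i := by
  rw [chainLen]; omega

lemma chainLen_lt (r : ℕ → ℕ → Prop) {j i : ℕ} (hji : j < i) (h : r j i) :
    chainLen r j < chainLen r i := by
  classical
  conv_rhs => rw [chainLen]
  have hmem : (⟨j, Finset.mem_range.mpr hji⟩ : {x // x ∈ Finset.range i}) ∈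
      ((Finset.range i).attach.filter (fun j => r j.1 i)) := by
    simp [Finset.mem_filter, h]
  have := Finset.le_sup (f := fun j : {x // x ∈ Finset.range i} => chainLen r j.1) hmem
  dsimp only at this
  omega

lemma chainLen_chain (r : ℕ → ℕ → Prop) (htrans : Transitive r) (i : ℕ) :
    ∃ g : Fin (chainLen r i) → ℕ, (∀ k l, k < l → r (g k) (g l)) ∧
      (∀ k, r (g k) i ∨ g k = i) := by
  classical
  induction i using Nat.strong_induction_on with
  | _ i IH =>
  by_cases hne : ((Finset.range i).attach.filter (fun j => r j.1 i)).Nonempty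
  · obtain ⟨j, hjF, hsup⟩ := Finset.exists_mem_eq_sup _ hne
      (fun j : {x // x ∈ Finset.range i} => chainLen r j.1)
    have hji : j.1 < i := Finset.mem_range.mp j.2
    have hrji : r j.1 i := (Finset.mem_filter.mp hjF).2
    have E : chainLen r i = chainLen r j.1 + 1 := by
      conv_lhs => rw [chainLen]
      rw [hsup]; omega
    obtain ⟨g', hg'1, hg'2⟩ := IH j.1 hji
    refine ⟨fun k => if h : (k : ℕ) < chainLen r j.1 then g' ⟨k, h⟩ else i, ?_, ?_⟩
    · intro k l hkl
      have hk2 := k.2; have hl2 := l.2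
      dsimp only
      by_cases hl : (l : ℕ) < chainLen r j.1
      · have hk : (k : ℕ) < chainLen r j.1 := lt_trans hkl hl
        rw [dif_pos hk, dif_pos hl]
        exact hg'1 _ _ hkl
      · have hk : (k : ℕ) < chainLen r j.1 := by omega
        rw [dif_pos hk, dif_neg hl]
        rcases hg'2 ⟨k, hk⟩ with h | h
        · exact htrans h hrji
        · rw [h]; exact hrji
    · intro k
      dsimp only
      by_cases hk : (k : ℕ) < chainLen r j.1
      · rw [dif_pos hk]
        left
        rcases hg'2 ⟨k, hk⟩ with h | h
        · exact htrans h hrji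
        · rw [h]; exact hrji
      · rw [dif_neg hk]; right; rfl
  · have E : chainLen r i = 1 := by
      rw [chainLen, Finset.not_nonempty_iff_eq_empty.mp hne]
      simp
    refine ⟨fun _ => i, ?_, fun k => Or.inr rfl⟩
    intro k l hkl
    have hk2 := k.2; have hl2 := l.2
    omega

lemma erdos_szekeres (r s : ℕ) (f : ℕ → ℝ) :
    (∃ g : Fin (r + 1) → ℕ, StrictMono g ∧ (∀ k, g k ≤ r * s) ∧ Monotone (f ∘ g)) ∨
    (∃ g : Fin (s + 1) → ℕ, StrictMono g ∧ (∀ k, g k ≤ r * s) ∧ Antitone (f ∘ g)) := by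
  set R : ℕ → ℕ → Prop := fun p q => p < q ∧ f p ≤ f q with hR
  set S : ℕ → ℕ → Prop := fun p q => p < q ∧ f q < f p with hS
  have hRt : Transitive R := fun a b c h1 h2 => ⟨lt_trans h1.1 h2.1, le_trans h1.2 h2.2⟩
  have hSt : Transitive S := fun a b c h1 h2 => ⟨lt_trans h1.1 h2.1, lt_trans h2.2 h1.2⟩
  have key : ∃ i, i ≤ r * s ∧ (r + 1 ≤ chainLen R i ∨ s + 1 ≤ chainLen S i) := by
    by_contra hcon
    push_neg at hcon
    have hmap : ∀ i ∈ Finset.range (r * s + 1),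
        (fun i => (chainLen R i - 1, chainLen S i - 1)) i ∈
          Finset.range r ×ˢ Finset.range s := by
      intro i hi
      rw [Finset.mem_range, Nat.lt_succ_iff] at hi
      obtain ⟨h1, h2⟩ := hcon i hi
      have p1 := chainLen_pos R i; have p2 := chainLen_pos S i
      simp only [Finset.mem_product, Finset.mem_range]
      omega
    have hinj : Set.InjOn (fun i => (chainLen R i - 1, chainLen S i - 1))
        (Finset.range (r * s + 1)) := by
      intro i hi j hj hij
      by_contra hne
      simp only [Finset.coe_range, Set.mem_Iio] at hi hj
      have hmain : ∀ p q : ℕ, p < q → q < r * s + 1 →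
          (chainLen R p - 1, chainLen S p - 1) ≠ (chainLen R q - 1, chainLen S q - 1) := by
        intro p q hpq hq hEq
        have p1 := chainLen_pos R p; have p2 := chainLen_pos S p
        have p3 := chainLen_pos R q; have p4 := chainLen_pos S q
        have h1 := congrArg Prod.fst hEq
        have h2 := congrArg Prod.snd hEq
        simp only at h1 h2
        rcases le_or_gt (f p) (f q) with hf | hf
        · have := chainLen_lt R hpq ⟨hpq, hf⟩
          omega
        · have := chainLen_lt S hpq ⟨hpq, hf⟩
          omega
      rcases lt_or_gt_of_ne hne with h | h
      · exact hmain i j h hj hij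
      · exact hmain j i h hi hij.symm
    have hcard := Finset.card_le_card_of_injOn _ hmap hinj
    simp only [Finset.card_range, Finset.card_product] at hcard
    omega
  obtain ⟨i, hile, hch⟩ := key
  rcases hch with h | h
  · left
    obtain ⟨g, hg1, hg2⟩ := chainLen_chain R hRt i
    have hbnd : ∀ k : Fin (chainLen R i), g k ≤ i := by
      intro k
      rcases hg2 k with hh | hh
      · exact le_of_lt hh.1
      · exact le_of_eq hh
    refine ⟨fun k => g ⟨k, lt_of_lt_of_le k.2 h⟩, ?_, ?_, ?_⟩
    · intro k l hkl
      exact (hg1 _ _ (Fin.mk_lt_mk.mpr hkl)).1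
    · intro k
      exact le_trans (hbnd _) hile
    · intro k l hkl
      rcases eq_or_lt_of_le hkl with hk | hk
      · rw [hk]
      · exact (hg1 _ _ (Fin.mk_lt_mk.mpr hk)).2
  · right
    obtain ⟨g, hg1, hg2⟩ := chainLen_chain S hSt i
    have hbnd : ∀ k : Fin (chainLen S i), g k ≤ i := by
      intro k
      rcases hg2 k with hh | hh
      · exact le_of_lt hh.1
      · exact le_of_eq hh
    refine ⟨fun k => g ⟨k, lt_of_lt_of_le k.2 h⟩, ?_, ?_, ?_⟩
    · intro k l hkl
      exact (hg1 _ _ (Fin.mk_lt_mk.mpr hkl)).1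
    · intro k
      exact le_trans (hbnd _) hile
    · intro k l hkl
      rcases eq_or_lt_of_le hkl with hk | hk
      · rw [hk]
      · exact le_of_lt (hg1 _ _ (Fin.mk_lt_mk.mpr hk)).2

lemma exists_mono_triple : ∀ (k : ℕ) (f : ℕ → Fin k → ℝ),
    ∃ a b c : ℕ, a < b ∧ b < c ∧ c < 2 ^ 2 ^ k + 1 ∧
      ∀ i, (f a i ≤ f b i ∧ f b i ≤ f c i) ∨ (f b i ≤ f a i ∧ f c i ≤ f b i)
  | 0, f => ⟨0, 1, 2, by omega, by omega, by norm_num, fun i => i.elim0⟩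
  | (e + 1), f => by
    set N := 2 ^ 2 ^ e with hN
    have hNN : N * N = 2 ^ 2 ^ (e + 1) := by
      rw [hN, ← pow_add, ← two_mul, pow_succ, mul_comm]
    rcases erdos_szekeres N N (fun t => f t (Fin.last e)) with ⟨g, hg, hgb, hgm⟩ |
        ⟨g, hg, hgb, hgm⟩
    · obtain ⟨a', b', c', hab, hbc, hc, hcoord⟩ := exists_mono_triple e
        (fun t i => f (g (if h : t < N + 1 then ⟨t, h⟩ else 0)) i.castSucc)
      have ha'lt : a' < N + 1 := by omega
      have hb'lt : b' < N + 1 := by omega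
      have hc'lt : c' < N + 1 := hc
      refine ⟨g ⟨a', ha'lt⟩, g ⟨b', hb'lt⟩, g ⟨c', hc'lt⟩,
        hg (Fin.mk_lt_mk.mpr hab), hg (Fin.mk_lt_mk.mpr hbc), by
          have := hgb ⟨c', hc'lt⟩; omega, ?_⟩
      intro i
      induction i using Fin.lastCases with
      | last =>
        left
        exact ⟨hgm (Fin.mk_le_mk.mpr (le_of_lt hab)), hgm (Fin.mk_le_mk.mpr (le_of_lt hbc))⟩
      | cast i' =>
        have := hcoord i'
        simp only [dif_pos ha'lt, dif_pos hb'lt, dif_pos hc'lt] at this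
        exact this
    · obtain ⟨a', b', c', hab, hbc, hc, hcoord⟩ := exists_mono_triple e
        (fun t i => f (g (if h : t < N + 1 then ⟨t, h⟩ else 0)) i.castSucc)
      have ha'lt : a' < N + 1 := by omega
      have hb'lt : b' < N + 1 := by omega
      have hc'lt : c' < N + 1 := hc
      refine ⟨g ⟨a', ha'lt⟩, g ⟨b', hb'lt⟩, g ⟨c', hc'lt⟩,
        hg (Fin.mk_lt_mk.mpr hab), hg (Fin.mk_lt_mk.mpr hbc), by
          have := hgb ⟨c', hc'lt⟩; omega, ?_⟩
      intro i
      induction i using Fin.lastCases with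
      | last =>
        right
        exact ⟨hgm (Fin.mk_le_mk.mpr (le_of_lt hab)), hgm (Fin.mk_le_mk.mpr (le_of_lt hbc))⟩
      | cast i' =>
        have := hcoord i'
        simp only [dif_pos ha'lt, dif_pos hb'lt, dif_pos hc'lt] at this
        exact this

lemma exists_mid_succ (e : ℕ) (f : Fin (2 ^ 2 ^ e + 1) → Fin (e + 1) → ℝ) :
    ∃ a b c, a ≠ b ∧ a ≠ c ∧ b ≠ c ∧ f b ∈ rectOf (f a) (f c) := by
  have hsort : Monotone ((fun j : Fin (2 ^ 2 ^ e + 1) => f j 0) ∘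
      Tuple.sort (fun j : Fin (2 ^ 2 ^ e + 1) => f j 0)) := Tuple.monotone_sort _
  set σ := Tuple.sort (fun j : Fin (2 ^ 2 ^ e + 1) => f j 0) with hσ
  obtain ⟨a', b', c', hab, hbc, hc, hcoord⟩ := exists_mono_triple e
    (fun t i => f (σ (if h : t < 2 ^ 2 ^ e + 1 then ⟨t, h⟩ else 0)) i.succ)
  have hc'lt : c' < 2 ^ 2 ^ e + 1 := hc
  have hb'lt : b' < 2 ^ 2 ^ e + 1 := lt_trans hbc hc'lt
  have ha'lt : a' < 2 ^ 2 ^ e + 1 := lt_trans hab hb'lt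
  refine ⟨σ ⟨a', ha'lt⟩, σ ⟨b', hb'lt⟩, σ ⟨c', hc'lt⟩, ?_, ?_, ?_, ?_⟩
  · intro hEq
    have := σ.injective hEq
    simp only [Fin.mk.injEq] at this
    omega
  · intro hEq
    have := σ.injective hEq
    simp only [Fin.mk.injEq] at this
    omega
  · intro hEq
    have := σ.injective hEq
    simp only [Fin.mk.injEq] at this
    omega
  · intro i
    induction i using Fin.cases with
    | zero =>
      have h1 : f (σ ⟨a', ha'lt⟩) 0 ≤ f (σ ⟨b', hb'lt⟩) 0 :=
        hsort (Fin.mk_le_mk.mpr (le_of_lt hab))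
      have h2 : f (σ ⟨b', hb'lt⟩) 0 ≤ f (σ ⟨c', hc'lt⟩) 0 :=
        hsort (Fin.mk_le_mk.mpr (le_of_lt hbc))
      exact ⟨le_trans (min_le_left _ _) h1, le_trans h2 (le_max_right _ _)⟩
    | succ i' =>
      have := hcoord i'
      simp only [dif_pos ha'lt, dif_pos hb'lt, dif_pos hc'lt] at this
      rcases this with ⟨h1, h2⟩ | ⟨h1, h2⟩
      · exact ⟨le_trans (min_le_left _ _) h1, le_trans h2 (le_max_right _ _)⟩
      · exact ⟨le_trans (min_le_right _ _) h2, le_trans h1 (le_max_left _ _)⟩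

lemma exists_mid (d : ℕ) (f : Fin (2 ^ 2 ^ (d - 1) + 1) → Fin d → ℝ) :
    ∃ a b c, a ≠ b ∧ a ≠ c ∧ b ≠ c ∧ f b ∈ rectOf (f a) (f c) := by
  cases d with
  | zero => exact ⟨0, 1, 2, by decide, by decide, by decide, fun i => i.elim0⟩
  | succ e => exact exists_mid_succ e f

lemma measurableSet_Srect (d : ℕ) :
    MeasurableSet {p : ((Fin d → ℝ) × (Fin d → ℝ)) × (Fin d → ℝ) | p.2 ∈ rectOf p.1.1 p.1.2} := by
  have hE : {p : ((Fin d → ℝ) × (Fin d → ℝ)) × (Fin d → ℝ) | p.2 ∈ rectOf p.1.1 p.1.2} =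
      ⋂ i, ({p : ((Fin d → ℝ) × (Fin d → ℝ)) × (Fin d → ℝ) |
          min (p.1.1 i) (p.1.2 i) ≤ p.2 i} ∩
        {p : ((Fin d → ℝ) × (Fin d → ℝ)) × (Fin d → ℝ) | p.2 i ≤ max (p.1.1 i) (p.1.2 i)}) := by
    ext p
    simp only [Set.mem_setOf_eq, Set.mem_iInter, Set.mem_inter_iff, rectOf]
  rw [hE]
  refine MeasurableSet.iInter fun i => MeasurableSet.inter ?_ ?_
  · exact measurableSet_le
      (Measurable.min (Measurable.eval measurable_fst.fst)
        (Measurable.eval measurable_fst.snd))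
      (Measurable.eval measurable_snd)
  · exact measurableSet_le (Measurable.eval measurable_snd)
      (Measurable.max (Measurable.eval measurable_fst.fst)
        (Measurable.eval measurable_fst.snd))

lemma pi_triple {d : ℕ} (m : ℕ) (D : Measure (Fin d → ℝ)) [IsProbabilityMeasure D]
    {a b c : Fin m} (hab : a ≠ b) (hac : a ≠ c) (hbc : b ≠ c)
    {s t u : Set (Fin d → ℝ)} (hs : MeasurableSet s) (ht : MeasurableSet t)
    (hu : MeasurableSet u) :
    Measure.pi (fun _ : Fin m => D) {x | x a ∈ s ∧ x c ∈ t ∧ x b ∈ u} =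
      D u * (D s * D t) := by
  classical
  set G : Fin m → Set (Fin d → ℝ) :=
    fun i => if i = a then s else if i = c then t else if i = b then u else Set.univ with hG
  have hset : {x : Fin m → Fin d → ℝ | x a ∈ s ∧ x c ∈ t ∧ x b ∈ u} = Set.pi Set.univ G := by
    ext x
    simp only [Set.mem_setOf_eq, Set.mem_pi, Set.mem_univ, true_implies, hG]
    constructor
    · rintro ⟨h1, h2, h3⟩ i
      split_ifs with e1 e2 e3
      · exact e1 ▸ h1
      · exact e2 ▸ h2
      · exact e3 ▸ h3
      · trivial
    · intro h
      refine ⟨?_, ?_, ?_⟩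
      · have := h a; rwa [if_pos rfl] at this
      · have := h c
        rwa [if_neg (fun hh => hac hh.symm), if_pos rfl] at this
      · have := h b
        rwa [if_neg (fun hh => hab hh.symm), if_neg (fun hh => hbc hh),
          if_pos rfl] at this
  rw [hset, Measure.pi_pi]
  have hval : ∀ i : Fin m, D (G i) =
      (if i = a then D s else 1) * ((if i = c then D t else 1) * (if i = b then D u else 1)) := by
    intro i
    simp only [hG]
    by_cases e1 : i = a
    · subst e1
      rw [if_pos rfl, if_pos rfl, if_neg hac, if_neg hab]
      ring
    · by_cases e2 : i = c
      · subst e2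
        rw [if_neg e1, if_pos rfl, if_neg e1, if_pos rfl, if_neg (fun hh => hbc hh.symm)]
        ring
      · by_cases e3 : i = b
        · subst e3
          rw [if_neg e1, if_neg e2, if_pos rfl, if_neg e1, if_neg e2, if_pos rfl]
          ring
        · rw [if_neg e1, if_neg e2, if_neg e3, if_neg e1, if_neg e2, if_neg e3]
          simp
  rw [Finset.prod_congr rfl fun i _ => hval i, Finset.prod_mul_distrib,
    Finset.prod_mul_distrib, Finset.prod_ite_eq' Finset.univ a fun _ => D s,
    Finset.prod_ite_eq' Finset.univ c fun _ => D t,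
    Finset.prod_ite_eq' Finset.univ b fun _ => D u]
  simp only [Finset.mem_univ, if_true]
  ring

lemma map_triple {d : ℕ} (m : ℕ) (D : Measure (Fin d → ℝ)) [IsProbabilityMeasure D]
    {a b c : Fin m} (hab : a ≠ b) (hac : a ≠ c) (hbc : b ≠ c) :
    Measure.map (fun x : Fin m → Fin d → ℝ => ((x a, x c), x b))
      (Measure.pi fun _ : Fin m => D) = (D.prod D).prod D := by
  classical
  set P := Measure.pi (fun _ : Fin m => D) with hP
  haveI : IsProbabilityMeasure P := by rw [hP]; infer_instance
  have hmeas3 : Measurable (fun x : Fin m → Fin d → ℝ => ((x a, x c), x b)) :=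
    ((measurable_pi_apply a).prodMk (measurable_pi_apply c)).prodMk (measurable_pi_apply b)
  have hpairmeas : Measurable (fun x : Fin m → Fin d → ℝ => (x a, x c)) :=
    (measurable_pi_apply a).prodMk (measurable_pi_apply c)
  refine (Measure.prod_eq (μ := D.prod D) (ν := D) fun S2 u hS2 hu => ?_).symm
  rw [Measure.map_apply hmeas3 (hS2.prod hu)]
  have hpre : (fun x : Fin m → Fin d → ℝ => ((x a, x c), x b)) ⁻¹' (S2 ×ˢ u) =
      ((fun x : Fin m → Fin d → ℝ => (x a, x c)) ⁻¹' S2) ∩ {x | x b ∈ u} := by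
    ext x
    simp [Set.mem_prod]
  rw [hpre]
  have hν1 : Measure.map (fun x : Fin m → Fin d → ℝ => (x a, x c))
      (P.restrict {x | x b ∈ u}) = D u • (D.prod D) := by
    haveI : IsFiniteMeasure (P.restrict {x : Fin m → Fin d → ℝ | x b ∈ u}) := by
      refine ⟨?_⟩
      rw [Measure.restrict_apply MeasurableSet.univ, Set.univ_inter]
      exact lt_of_le_of_lt (measure_mono (Set.subset_univ _)) (by simp)
    haveI : IsFiniteMeasure (Measure.map (fun x : Fin m → Fin d → ℝ => (x a, x c))
        (P.restrict {x | x b ∈ u})) := by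
      refine ⟨?_⟩
      rw [Measure.map_apply hpairmeas MeasurableSet.univ, Set.preimage_univ]
      exact measure_lt_top _ _
    refine ext_of_generate_finite _ generateFrom_prod.symm isPiSystem_prod ?_ ?_
    · rintro S ⟨s, hs, t, ht, rfl⟩
      simp only [Set.mem_setOf_eq] at hs ht
      rw [Measure.map_apply hpairmeas (hs.prod ht),
        Measure.restrict_apply (hpairmeas (hs.prod ht))]
      have hEq : (fun x : Fin m → Fin d → ℝ => (x a, x c)) ⁻¹' (s ×ˢ t) ∩ {x | x b ∈ u} =
          {x | x a ∈ s ∧ x c ∈ t ∧ x b ∈ u} := by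
        ext x
        simp [Set.mem_prod, and_assoc]
      rw [hEq, pi_triple m D hab hac hbc hs ht hu, Measure.smul_apply,
        Measure.prod_prod, smul_eq_mul]
    · rw [Measure.map_apply hpairmeas MeasurableSet.univ, Set.preimage_univ,
        Measure.restrict_apply MeasurableSet.univ, Set.univ_inter]
      have hEq : {x : Fin m → Fin d → ℝ | x b ∈ u} =
          {x | x a ∈ Set.univ ∧ x c ∈ Set.univ ∧ x b ∈ u} := by
        ext x; simp
      rw [hEq, pi_triple m D hab hac hbc MeasurableSet.univ MeasurableSet.univ hu]
      simp [Measure.smul_apply]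
  have hstep : P (((fun x : Fin m → Fin d → ℝ => (x a, x c)) ⁻¹' S2) ∩ {x | x b ∈ u}) =
      (Measure.map (fun x : Fin m → Fin d → ℝ => (x a, x c))
        (P.restrict {x | x b ∈ u})) S2 := by
    rw [Measure.map_apply hpairmeas hS2, Measure.restrict_apply (hpairmeas hS2)]
  rw [hstep, hν1, Measure.smul_apply, smul_eq_mul]
  ring

/-- **Lemma 2.9 (lower bound part).** For any Borel probability measure `D` on `ℝ^d`, if
`x, y` are independent points distributed according to `D`, then
`E_{x,y∼D}[D(R_{x,y})] ≥ β_d` where `β_d = (2^(2^(d−1)) + 1)^(−3)`. -/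
theorem random_rectangle_mass_lower_bound (d : ℕ) (D : Measure (Fin d → ℝ))
    [IsProbabilityMeasure D] :
    ((2 : ℝ) ^ (2 ^ (d - 1)) + 1) ^ (-(3 : ℤ)) ≤
      ∫ z : (Fin d → ℝ) × (Fin d → ℝ), (D (rectOf z.1 z.2)).toReal ∂(D.prod D) := by
  classical
  set m := 2 ^ 2 ^ (d - 1) + 1 with hm
  set P := Measure.pi (fun _ : Fin m => D) with hP
  haveI : IsProbabilityMeasure P := by rw [hP]; infer_instance
  set J := ∫⁻ p : (Fin d → ℝ) × (Fin d → ℝ), D (rectOf p.1 p.2) ∂(D.prod D) with hJ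
  have hPA : ∀ a b c : Fin m, a ≠ b → a ≠ c → b ≠ c →
      P {x | x b ∈ rectOf (x a) (x c)} = J := by
    intro a b c hab hac hbc
    have hmeas3 : Measurable (fun x : Fin m → Fin d → ℝ => ((x a, x c), x b)) :=
      ((measurable_pi_apply a).prodMk (measurable_pi_apply c)).prodMk (measurable_pi_apply b)
    have hEq : {x : Fin m → Fin d → ℝ | x b ∈ rectOf (x a) (x c)} =
        (fun x : Fin m → Fin d → ℝ => ((x a, x c), x b)) ⁻¹'
          {p : ((Fin d → ℝ) × (Fin d → ℝ)) × (Fin d → ℝ) | p.2 ∈ rectOf p.1.1 p.1.2} := rfl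
    rw [hP, hEq, ← Measure.map_apply hmeas3 (measurableSet_Srect d),
      map_triple m D hab hac hbc, Measure.prod_apply (measurableSet_Srect d), hJ]
    exact lintegral_congr fun p => rfl
  set T : Finset (Fin m × Fin m × Fin m) :=
    Finset.univ.filter (fun t => t.1 ≠ t.2.1 ∧ t.1 ≠ t.2.2 ∧ t.2.1 ≠ t.2.2) with hT
  have hcover : (Set.univ : Set (Fin m → Fin d → ℝ)) ⊆
      ⋃ t ∈ T, {x : Fin m → Fin d → ℝ | x t.2.1 ∈ rectOf (x t.1) (x t.2.2)} := by
    intro x _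
    obtain ⟨a, b, c, hab, hac, hbc, hmem⟩ := exists_mid d x
    refine Set.mem_iUnion₂.mpr ⟨((a, b, c) : Fin m × Fin m × Fin m), ?_, hmem⟩
    simp only [hT, Finset.mem_filter, Finset.mem_univ, true_and]
    exact ⟨hab, hac, hbc⟩
  have h1 : (1 : ℝ≥0∞) ≤ (m ^ 3 : ℕ) * J := by
    have hsum : ∑ t ∈ T, P {x : Fin m → Fin d → ℝ | x t.2.1 ∈ rectOf (x t.1) (x t.2.2)} =
        T.card * J := by
      have heach : ∀ t ∈ T, P {x : Fin m → Fin d → ℝ | x t.2.1 ∈ rectOf (x t.1) (x t.2.2)} =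
          J := by
        intro t ht
        rw [hT, Finset.mem_filter] at ht
        exact hPA t.1 t.2.1 t.2.2 ht.2.1 ht.2.2.1 ht.2.2.2
      calc ∑ t ∈ T, P {x : Fin m → Fin d → ℝ | x t.2.1 ∈ rectOf (x t.1) (x t.2.2)}
          = ∑ _t ∈ T, J := Finset.sum_congr rfl heach
        _ = T.card * J := by rw [Finset.sum_const, nsmul_eq_mul]
    have hcard : (T.card : ℝ≥0∞) ≤ ((m ^ 3 : ℕ) : ℝ≥0∞) := by
      have hcards : Fintype.card (Fin m × Fin m × Fin m) = m ^ 3 := by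
        simp [Fintype.card_prod]
        ring
      have : T.card ≤ m ^ 3 := hcards ▸ Finset.card_le_univ T
      exact_mod_cast this
    calc (1 : ℝ≥0∞) = P Set.univ := measure_univ.symm
      _ ≤ P (⋃ t ∈ T, {x : Fin m → Fin d → ℝ | x t.2.1 ∈ rectOf (x t.1) (x t.2.2)}) :=
          measure_mono hcover
      _ ≤ ∑ t ∈ T, P {x : Fin m → Fin d → ℝ | x t.2.1 ∈ rectOf (x t.1) (x t.2.2)} :=
          measure_biUnion_finset_le _ _
      _ = T.card * J := hsum
      _ ≤ (m ^ 3 : ℕ) * J := mul_le_mul_left hcard _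
  have hC0 : ((m ^ 3 : ℕ) : ℝ≥0∞) ≠ 0 := Nat.cast_ne_zero.mpr (by positivity)
  have hCt : ((m ^ 3 : ℕ) : ℝ≥0∞) ≠ ⊤ := ENNReal.natCast_ne_top _
  have hJlow : (((m ^ 3 : ℕ) : ℝ≥0∞))⁻¹ ≤ J := by
    have h2 : (((m ^ 3 : ℕ) : ℝ≥0∞))⁻¹ * 1 ≤ (((m ^ 3 : ℕ) : ℝ≥0∞))⁻¹ * ((m ^ 3 : ℕ) * J) :=
      mul_le_mul_right h1 _
    rwa [mul_one, ← mul_assoc, ENNReal.inv_mul_cancel hC0 hCt, one_mul] at h2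
  have hJtop : J ≤ 1 := by
    rw [hJ]
    calc ∫⁻ p : (Fin d → ℝ) × (Fin d → ℝ), D (rectOf p.1 p.2) ∂(D.prod D)
        ≤ ∫⁻ _ : (Fin d → ℝ) × (Fin d → ℝ), 1 ∂(D.prod D) :=
          lintegral_mono fun p => prob_le_one
      _ = 1 := by simp
  have hJne : J ≠ ⊤ := ne_top_of_le_ne_top ENNReal.one_ne_top hJtop
  have hmeasJf : Measurable (fun p : (Fin d → ℝ) × (Fin d → ℝ) => D (rectOf p.1 p.2)) := by
    have := measurable_measure_prodMk_left (ν := D) (measurableSet_Srect d)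
    exact this
  have hint : ∫ z : (Fin d → ℝ) × (Fin d → ℝ), (D (rectOf z.1 z.2)).toReal ∂(D.prod D) =
      J.toReal := by
    rw [hJ]
    exact integral_toReal hmeasJf.aemeasurable
      (Filter.Eventually.of_forall fun p => measure_lt_top _ _)
  rw [hint]
  have hfin := ENNReal.toReal_mono hJne hJlow
  refine le_trans (le_of_eq ?_) hfin
  have hLHS : ((2 : ℝ) ^ (2 ^ (d - 1)) + 1) ^ (-(3 : ℤ)) =
      ((((m ^ 3 : ℕ) : ℝ≥0∞))⁻¹).toReal := by
    rw [ENNReal.toReal_inv, ENNReal.toReal_natCast, zpow_neg]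
    congr 1
    rw [show (3 : ℤ) = ((3 : ℕ) : ℤ) by norm_num, zpow_natCast]
    push_cast [hm]
    ring
  exact hLHS
end

section
/- For every integer d ≥ 1 there exists a Borel probability measure D on ℝ^d such that E_{x,y∼D}[ D(R_{x,y}) ] ≤ 2 / 2^(2^(d−1)), where x, y are independent random points each distributed according to D. (In particular, D can be taken to be the uniform distribution over a suitable finite set of 2^(2^(d−1)) points.) -/
open MeasureTheory
open scoped ENNReal

section helpers

lemma gap_aux {X Y s t ε δ : ℝ} (hδ : 0 < δ) (hXY : δ ≤ |X - Y|) (hst : |s - t| ≤ 1)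
    (hε : ε = δ/4) : δ/4 ≤ |(2⁻¹*X + ε*s) - (2⁻¹*Y + ε*t)| := by
  have h1 : (2⁻¹*X + ε*s) - (2⁻¹*Y + ε*t) = 2⁻¹*(X-Y) - (-(ε*(s-t))) := by ring
  have h2 : |2⁻¹*(X-Y)| - |(-(ε*(s-t)))| ≤ |(2⁻¹*X + ε*s) - (2⁻¹*Y + ε*t)| := by
    rw [h1]; exact abs_sub_abs_le_abs_sub _ _
  have h3 : |2⁻¹*(X-Y)| = 2⁻¹*|X-Y| := by rw [abs_mul]; norm_num
  have h4 : |(-(ε*(s-t)))| ≤ δ/4 := by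
    rw [abs_neg, abs_mul, hε, abs_of_nonneg (by linarith : (0:ℝ) ≤ δ/4)]
    nlinarith [abs_nonneg (s-t)]
  nlinarith

lemma block_between {δ ε X Y Z u v w : ℝ} (hδ : 0 < δ) (hε : ε = δ/4)
    (hu : 0 ≤ u) (hu1 : u ≤ 1) (hv : 0 ≤ v) (hv1 : v ≤ 1) (hw : 0 ≤ w) (hw1 : w ≤ 1)
    (hZX : Z ≠ X → δ ≤ |Z - X|) (hZY : Z ≠ Y → δ ≤ |Z - Y|)
    (h1 : min (2⁻¹*X + ε*u) (2⁻¹*Y + ε*v) ≤ 2⁻¹*Z + ε*w)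
    (h2 : 2⁻¹*Z + ε*w ≤ max (2⁻¹*X + ε*u) (2⁻¹*Y + ε*v)) :
    min X Y ≤ Z ∧ Z ≤ max X Y := by
  constructor
  · by_contra h
    push_neg at h
    have hzx : Z < X := lt_of_lt_of_le h (min_le_left _ _)
    have hzy : Z < Y := lt_of_lt_of_le h (min_le_right _ _)
    have gx : δ ≤ X - Z := by
      have := hZX (ne_of_lt hzx); rw [abs_of_nonpos (by linarith)] at this; linarith
    have gy : δ ≤ Y - Z := by
      have := hZY (ne_of_lt hzy); rw [abs_of_nonpos (by linarith)] at this; linarith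
    have : 2⁻¹*Z + ε*w < min (2⁻¹*X + ε*u) (2⁻¹*Y + ε*v) := by
      apply lt_min <;> nlinarith
    linarith
  · by_contra h
    push_neg at h
    have hzx : X < Z := lt_of_le_of_lt (le_max_left _ _) h
    have hzy : Y < Z := lt_of_le_of_lt (le_max_right _ _) h
    have gx : δ ≤ Z - X := by
      have := hZX (ne_of_gt hzx); rw [abs_of_nonneg (by linarith)] at this; linarith
    have gy : δ ≤ Z - Y := by
      have := hZY (ne_of_gt hzy); rw [abs_of_nonneg (by linarith)] at this; linarith
    have : max (2⁻¹*X + ε*u) (2⁻¹*Y + ε*v) < 2⁻¹*Z + ε*w := by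
      apply max_lt <;> nlinarith
    linarith

lemma f_between {ε C s t w : ℝ} (hε : 0 < ε)
    (h1 : min (C + ε*s) (C + ε*t) ≤ C + ε*w) (h2 : C + ε*w ≤ max (C + ε*s) (C + ε*t)) :
    min s t ≤ w ∧ w ≤ max s t := by
  rcases le_total s t with h | h
  · rw [min_eq_left (by nlinarith)] at h1
    rw [max_eq_right (by nlinarith : C + ε*s ≤ C + ε*t)] at h2
    rw [min_eq_left h, max_eq_right h]
    constructor <;> nlinarith
  · rw [min_eq_right (by nlinarith)] at h1
    rw [max_eq_left (by nlinarith : C + ε*t ≤ C + ε*s)] at h2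
    rw [min_eq_right h, max_eq_left h]
    constructor <;> nlinarith

end helpers

section step

variable {d : ℕ} {ι : Type}

/-- One step of the recursive construction. -/
noncomputable def stepPts (hd : 0 < d) (p : ι → Fin d → ℝ) (ε : ℝ) :
    ι × ι → Fin (d+1) → ℝ := fun ef j =>
  if h : (j : ℕ) < d then 2⁻¹ * p ef.1 ⟨j.1, h⟩ + ε * p ef.2 ⟨j.1, h⟩
  else 2⁻¹ * p ef.1 ⟨d-1, Nat.sub_lt hd one_pos⟩
    + ε * (1 - p ef.2 ⟨d-1, Nat.sub_lt hd one_pos⟩)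

end step

section step2

variable {d : ℕ} {ι : Type}

/-- The goodness predicate for a family of points. -/
def GoodPts {d : ℕ} {ι : Type} (p : ι → Fin d → ℝ) (δ : ℝ) : Prop :=
  0 < δ ∧ δ ≤ 1 ∧ (∀ i j, p i j ∈ Set.Icc (0:ℝ) 1) ∧
  (∀ (j : Fin d) a b, a ≠ b → δ ≤ |p a j - p b j|) ∧
  (∀ a b c, (∀ j, min (p a j) (p b j) ≤ p c j ∧ p c j ≤ max (p a j) (p b j)) →
    c = a ∨ c = b)

lemma stepPts_apply_lt (hd : 0 < d) (p : ι → Fin d → ℝ) (ε : ℝ) (ef : ι × ι)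
    (m : ℕ) (hm : m < d) (hm' : m < d + 1) :
    stepPts hd p ε ef ⟨m, hm'⟩ = 2⁻¹ * p ef.1 ⟨m, hm⟩ + ε * p ef.2 ⟨m, hm⟩ :=
  dif_pos hm

lemma stepPts_apply_last (hd : 0 < d) (p : ι → Fin d → ℝ) (ε : ℝ) (ef : ι × ι)
    (h' : d < d + 1) :
    stepPts hd p ε ef ⟨d, h'⟩ = 2⁻¹ * p ef.1 ⟨d-1, Nat.sub_lt hd one_pos⟩
      + ε * (1 - p ef.2 ⟨d-1, Nat.sub_lt hd one_pos⟩) :=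
  dif_neg (lt_irrefl d)

lemma stepPts_apply_notlt (hd : 0 < d) (p : ι → Fin d → ℝ) (ε : ℝ) (ef : ι × ι)
    (m : ℕ) (hm' : m < d + 1) (hm : ¬ m < d) :
    stepPts hd p ε ef ⟨m, hm'⟩ = 2⁻¹ * p ef.1 ⟨d-1, Nat.sub_lt hd one_pos⟩
      + ε * (1 - p ef.2 ⟨d-1, Nat.sub_lt hd one_pos⟩) :=
  dif_neg hm

lemma step_good_aux (hd : 0 < d) (p : ι → Fin d → ℝ) {δ : ℝ} (hg : GoodPts p δ)
    (a b c : ι × ι)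
    (hbet : ∀ j, min (stepPts hd p (δ/4) a j) (stepPts hd p (δ/4) b j)
        ≤ stepPts hd p (δ/4) c j ∧
      stepPts hd p (δ/4) c j ≤ max (stepPts hd p (δ/4) a j) (stepPts hd p (δ/4) b j))
    (hca : c.1 = a.1) : c = a ∨ c = b := by
  obtain ⟨hδ0, hδ1, hbd, hgap, hgood⟩ := hg
  have hε0 : (0:ℝ) < δ/4 := by linarith
  by_cases hab : a.1 = b.1
  · -- all three in the same block: use the f-components
    have hf : ∀ J : Fin d, min (p a.2 J) (p b.2 J) ≤ p c.2 J ∧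
        p c.2 J ≤ max (p a.2 J) (p b.2 J) := by
      intro J
      have hb := hbet ⟨J.1, by omega⟩
      rw [stepPts_apply_lt hd p _ a J.1 J.2 (by omega),
        stepPts_apply_lt hd p _ b J.1 J.2 (by omega),
        stepPts_apply_lt hd p _ c J.1 J.2 (by omega)] at hb
      simp only [Fin.eta] at hb
      rw [hca, ← hab] at hb
      exact f_between hε0 hb.1 hb.2
    rcases hgood a.2 b.2 c.2 hf with h | h
    · exact Or.inl (Prod.ext_iff.mpr ⟨hca, h⟩)
    · exact Or.inr (Prod.ext_iff.mpr ⟨hca.trans hab, h⟩)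
  · -- c in a's block, b in another block: conclude c = a
    left
    set jd : Fin d := ⟨d-1, Nat.sub_lt hd one_pos⟩ with hjd
    have h1 := hbet ⟨d-1, by omega⟩
    have h2 := hbet ⟨d, by omega⟩
    rw [stepPts_apply_lt hd p _ a (d-1) (Nat.sub_lt hd one_pos) (by omega),
      stepPts_apply_lt hd p _ b (d-1) (Nat.sub_lt hd one_pos) (by omega),
      stepPts_apply_lt hd p _ c (d-1) (Nat.sub_lt hd one_pos) (by omega)] at h1
    rw [stepPts_apply_last hd p _ a (by omega), stepPts_apply_last hd p _ b (by omega),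
      stepPts_apply_last hd p _ c (by omega)] at h2
    rw [hca] at h1 h2
    have hXY : δ ≤ |p a.1 jd - p b.1 jd| := hgap jd a.1 b.1 hab
    have hba := hbd a.2 jd
    have hbb := hbd b.2 jd
    have hbc := hbd c.2 jd
    simp only [Set.mem_Icc] at hba hbb hbc
    have huc : p c.2 jd = p a.2 jd := by
      have t1 : 0 ≤ δ/4 * p a.2 jd := mul_nonneg (le_of_lt hε0) hba.1
      have t2 : δ/4 * p a.2 jd ≤ δ/4 := mul_le_of_le_one_right (le_of_lt hε0) hba.2
      have t3 : 0 ≤ δ/4 * p b.2 jd := mul_nonneg (le_of_lt hε0) hbb.1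
      have t4 : δ/4 * p b.2 jd ≤ δ/4 := mul_le_of_le_one_right (le_of_lt hε0) hbb.2
      have t5 : 0 ≤ δ/4 * p c.2 jd := mul_nonneg (le_of_lt hε0) hbc.1
      have t6 : δ/4 * p c.2 jd ≤ δ/4 := mul_le_of_le_one_right (le_of_lt hε0) hbc.2
      have key : δ/4 * p c.2 jd = δ/4 * p a.2 jd := by
        rcases le_or_gt (p a.1 jd) (p b.1 jd) with hxy | hxy
        · have hYX : δ ≤ p b.1 jd - p a.1 jd := by
            rw [abs_of_nonpos (by linarith)] at hXY; linarith
          have hn1 : ¬(2⁻¹ * p b.1 jd + δ/4 * p b.2 jd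
              ≤ 2⁻¹ * p a.1 jd + δ/4 * p c.2 jd) := by intro hcon; linarith
          have hA1 := (min_le_iff.mp h1.1).resolve_right hn1
          have hn2 : ¬(2⁻¹ * p b.1 jd + δ/4 * (1 - p b.2 jd)
              ≤ 2⁻¹ * p a.1 jd + δ/4 * (1 - p c.2 jd)) := by
            intro hcon
            rw [mul_sub, mul_sub] at hcon; linarith
          have hA2 := (min_le_iff.mp h2.1).resolve_right hn2
          rw [mul_sub, mul_sub] at hA2; linarith
        · have hYX : δ ≤ p a.1 jd - p b.1 jd := by
            rw [abs_of_nonneg (by linarith)] at hXY; linarith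
          have hn1 : ¬(2⁻¹ * p a.1 jd + δ/4 * p c.2 jd
              ≤ 2⁻¹ * p b.1 jd + δ/4 * p b.2 jd) := by intro hcon; linarith
          have hA1 := (le_max_iff.mp h1.2).resolve_right hn1
          have hn2 : ¬(2⁻¹ * p a.1 jd + δ/4 * (1 - p c.2 jd)
              ≤ 2⁻¹ * p b.1 jd + δ/4 * (1 - p b.2 jd)) := by
            intro hcon
            rw [mul_sub, mul_sub] at hcon; linarith
          have hA2 := (le_max_iff.mp h2.2).resolve_right hn2
          rw [mul_sub, mul_sub] at hA2; linarith
      exact mul_left_cancel₀ (ne_of_gt hε0) key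
    have hc2 : c.2 = a.2 := by
      by_contra hne
      have := hgap jd c.2 a.2 hne
      rw [huc] at this
      simp at this
      linarith
    exact Prod.ext_iff.mpr ⟨hca, hc2⟩

end step2

section step3

variable {d : ℕ} {ι : Type}

lemma step_good (hd : 0 < d) (p : ι → Fin d → ℝ) {δ : ℝ} (hg : GoodPts p δ) :
    GoodPts (stepPts hd p (δ/4)) (δ*δ/4) := by
  obtain ⟨hδ0, hδ1, hbd, hgap, hgood⟩ := hg
  have hε0 : (0:ℝ) < δ/4 := by linarith
  refine ⟨by nlinarith, by nlinarith, ?_, ?_, ?_⟩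
  · -- bounds
    intro ef j
    obtain ⟨m, hm'⟩ := j
    by_cases hm : m < d
    · rw [stepPts_apply_lt hd p _ ef m hm hm']
      have h1 := hbd ef.1 ⟨m, hm⟩
      have h2 := hbd ef.2 ⟨m, hm⟩
      simp only [Set.mem_Icc] at h1 h2 ⊢
      constructor
      · have := mul_nonneg (le_of_lt hε0) h2.1; linarith
      · have := mul_le_of_le_one_right (le_of_lt hε0) h2.2; linarith
    · rw [stepPts_apply_notlt hd p _ ef m hm' hm]
      have h1 := hbd ef.1 ⟨d-1, Nat.sub_lt hd one_pos⟩
      have h2 := hbd ef.2 ⟨d-1, Nat.sub_lt hd one_pos⟩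
      simp only [Set.mem_Icc] at h1 h2 ⊢
      constructor
      · have := mul_nonneg (le_of_lt hε0) (by linarith : (0:ℝ) ≤ 1 - p ef.2 ⟨d-1, Nat.sub_lt hd one_pos⟩)
        linarith
      · have := mul_le_of_le_one_right (le_of_lt hε0) (by linarith : 1 - p ef.2 ⟨d-1, Nat.sub_lt hd one_pos⟩ ≤ 1)
        linarith
  · -- gap
    intro j a b hab
    obtain ⟨m, hm'⟩ := j
    by_cases hm : m < d
    · rw [stepPts_apply_lt hd p _ a m hm hm', stepPts_apply_lt hd p _ b m hm hm']
      by_cases he : a.1 = b.1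
      · have hne : a.2 ≠ b.2 := fun h2 => hab (Prod.ext_iff.mpr ⟨he, h2⟩)
        have hgf := hgap ⟨m, hm⟩ a.2 b.2 hne
        have heq : (2⁻¹ * p a.1 ⟨m, hm⟩ + δ/4 * p a.2 ⟨m, hm⟩)
            - (2⁻¹ * p b.1 ⟨m, hm⟩ + δ/4 * p b.2 ⟨m, hm⟩)
            = δ/4 * (p a.2 ⟨m, hm⟩ - p b.2 ⟨m, hm⟩) := by rw [he]; ring
        rw [heq, abs_mul, abs_of_nonneg (le_of_lt hε0)]
        calc δ*δ/4 = δ/4 * δ := by ring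
        _ ≤ δ/4 * |p a.2 ⟨m, hm⟩ - p b.2 ⟨m, hm⟩| :=
            mul_le_mul_of_nonneg_left hgf (le_of_lt hε0)
      · have h1 := hbd a.2 ⟨m, hm⟩
        have h2 := hbd b.2 ⟨m, hm⟩
        simp only [Set.mem_Icc] at h1 h2
        have habs : |p a.2 ⟨m, hm⟩ - p b.2 ⟨m, hm⟩| ≤ 1 :=
          abs_le.mpr ⟨by linarith, by linarith⟩
        have := gap_aux hδ0 (hgap ⟨m, hm⟩ a.1 b.1 he) habs rfl
        nlinarith
    · rw [stepPts_apply_notlt hd p _ a m hm' hm, stepPts_apply_notlt hd p _ b m hm' hm]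
      set jd : Fin d := ⟨d-1, Nat.sub_lt hd one_pos⟩ with hjd
      by_cases he : a.1 = b.1
      · have hne : a.2 ≠ b.2 := fun h2 => hab (Prod.ext_iff.mpr ⟨he, h2⟩)
        have hgf := hgap jd b.2 a.2 (Ne.symm hne)
        have heq : (2⁻¹ * p a.1 jd + δ/4 * (1 - p a.2 jd))
            - (2⁻¹ * p b.1 jd + δ/4 * (1 - p b.2 jd))
            = δ/4 * (p b.2 jd - p a.2 jd) := by rw [he]; ring
        rw [heq, abs_mul, abs_of_nonneg (le_of_lt hε0)]
        calc δ*δ/4 = δ/4 * δ := by ring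
        _ ≤ δ/4 * |p b.2 jd - p a.2 jd| := mul_le_mul_of_nonneg_left hgf (le_of_lt hε0)
      · have h1 := hbd a.2 jd
        have h2 := hbd b.2 jd
        simp only [Set.mem_Icc] at h1 h2
        have habs : |(1 - p a.2 jd) - (1 - p b.2 jd)| ≤ 1 :=
          abs_le.mpr ⟨by linarith, by linarith⟩
        have := gap_aux hδ0 (hgap jd a.1 b.1 he) habs rfl
        nlinarith
  · -- goodness
    intro a b c hbet
    have hblock : ∀ J : Fin d, min (p a.1 J) (p b.1 J) ≤ p c.1 J ∧
        p c.1 J ≤ max (p a.1 J) (p b.1 J) := by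
      intro J
      have hb := hbet ⟨J.1, by omega⟩
      rw [stepPts_apply_lt hd p _ a J.1 J.2 (by omega),
        stepPts_apply_lt hd p _ b J.1 J.2 (by omega),
        stepPts_apply_lt hd p _ c J.1 J.2 (by omega)] at hb
      simp only [Fin.eta] at hb
      have hba := hbd a.2 J
      have hbb := hbd b.2 J
      have hbc := hbd c.2 J
      simp only [Set.mem_Icc] at hba hbb hbc
      refine block_between hδ0 rfl hba.1 hba.2 hbb.1 hbb.2 hbc.1 hbc.2 ?_ ?_ hb.1 hb.2
      · intro hne
        refine hgap J c.1 a.1 fun h' => hne ?_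
        rw [h']
      · intro hne
        refine hgap J c.1 b.1 fun h' => hne ?_
        rw [h']
    rcases hgood a.1 b.1 c.1 hblock with h | h
    · exact step_good_aux hd p ⟨hδ0, hδ1, hbd, hgap, hgood⟩ a b c hbet h
    · have hbet' : ∀ j, min (stepPts hd p (δ/4) b j) (stepPts hd p (δ/4) a j)
          ≤ stepPts hd p (δ/4) c j ∧
          stepPts hd p (δ/4) c j ≤ max (stepPts hd p (δ/4) b j) (stepPts hd p (δ/4) a j) := by
        intro j
        rw [min_comm, max_comm]
        exact hbet j
      rcases step_good_aux hd p ⟨hδ0, hδ1, hbd, hgap, hgood⟩ b a c hbet' h with h' | h'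
      · exact Or.inr h'
      · exact Or.inl h'

end step3

lemma exists_good (d : ℕ) (hd : 1 ≤ d) :
    ∃ (ι : Type) (F : Fintype ι) (p : ι → Fin d → ℝ) (δ : ℝ),
      @Fintype.card ι F = 2^(2^(d-1)) ∧ GoodPts p δ := by
  induction d, hd using Nat.le_induction with
  | base =>
    refine ⟨Bool, inferInstance, fun b _ => if b then 1 else 0, 1, by norm_num, ?_⟩
    refine ⟨one_pos, le_refl 1, ?_, ?_, ?_⟩
    · intro i j; dsimp only; split <;> simp [Set.mem_Icc]
    · intro j a b hab
      cases a <;> cases b <;> simp_all <;> linarith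
    · intro a b c h
      have h0 := h ⟨0, one_pos⟩
      cases a <;> cases b <;> cases c <;> simp_all <;> linarith
  | succ d hd1 ih =>
    obtain ⟨ι, F, p, δ, hcard, hg⟩ := ih
    letI := F
    have hd0 : 0 < d := hd1
    refine ⟨ι × ι, inferInstance, stepPts hd0 p (δ/4), δ*δ/4, ?_, step_good hd0 p hg⟩
    rw [Fintype.card_prod, hcard, ← pow_add]
    congr 1
    have h1 : d - 1 + 1 = d := by omega
    rw [← two_mul, ← pow_succ', h1, Nat.add_sub_cancel]

section final

lemma measurableSet_rectOf {d : ℕ} (x y : Fin d → ℝ) : MeasurableSet (rectOf x y) := by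
  have : rectOf x y = ⋂ i, (fun z : Fin d → ℝ => z i) ⁻¹'
      (Set.Icc (min (x i) (y i)) (max (x i) (y i))) := by
    ext z
    simp [rectOf, Set.mem_iInter, Set.mem_Icc]
  rw [this]
  exact MeasurableSet.iInter fun i => measurableSet_Icc.preimage (measurable_pi_apply i)

/-- **Lemma 2.9 (tightness part).** For every `d ≥ 1` there exists a Borel probability
measure `D` on `ℝ^d` (which can be taken uniform over a suitable set of `2^(2^(d−1))`
points) with `E_{x,y∼D}[D(R_{x,y})] ≤ 2/2^(2^(d−1))`. -/
theorem random_rectangle_mass_upper_bound_example (d : ℕ) (hd : 1 ≤ d) :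
    ∃ D : Measure (Fin d → ℝ), IsProbabilityMeasure D ∧
      ∫ z : (Fin d → ℝ) × (Fin d → ℝ), (D (rectOf z.1 z.2)).toReal ∂(D.prod D) ≤
        2 / (2 : ℝ) ^ (2 ^ (d - 1)) := by
  classical
  obtain ⟨ι, F, p0, δ, hcard, hδ0, hδ1, hbd, hgap, hgood⟩ := exists_good d hd
  letI := F
  set N : ℕ := 2^(2^(d-1)) with hN
  have hN0 : 0 < N := pow_pos (by norm_num) _
  let e : ι ≃ Fin N := Fintype.equivFinOfCardEq hcard
  set p : Fin N → Fin d → ℝ := p0 ∘ e.symm with hp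
  -- transferred properties
  have hgap' : ∀ (j : Fin d) a b, a ≠ b → δ ≤ |p a j - p b j| := by
    intro j a b hab
    exact hgap j (e.symm a) (e.symm b) fun h => hab (e.symm.injective h)
  have hgood' : ∀ a b c, p c ∈ rectOf (p a) (p b) → c = a ∨ c = b := by
    intro a b c h
    rcases hgood (e.symm a) (e.symm b) (e.symm c) h with h' | h'
    · exact Or.inl (e.symm.injective h')
    · exact Or.inr (e.symm.injective h')
  have hNe0 : ((N : ℝ≥0∞)) ≠ 0 := by
    simp [Nat.cast_ne_zero]
    omega
  have hNetop : ((N : ℝ≥0∞)) ≠ ⊤ := ENNReal.natCast_ne_top N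
  set μ0 : Measure (Fin N) := ((N : ℝ≥0∞))⁻¹ • Measure.count with hμ0
  have hμ0prob : IsProbabilityMeasure μ0 := by
    constructor
    rw [hμ0, Measure.smul_apply, Measure.count_univ, smul_eq_mul]
    simp only [ENat.card_eq_coe_fintype_card, Fintype.card_fin, ENat.toENNReal_coe]
    exact ENNReal.inv_mul_cancel hNe0 hNetop
  have hpm : Measurable p := Measurable.of_discrete
  set D : Measure (Fin d → ℝ) := μ0.map p with hD
  have hDprob : IsProbabilityMeasure D := Measure.isProbabilityMeasure_map hpm.aemeasurable
  refine ⟨D, hDprob, ?_⟩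
  -- formula for D of a measurable set
  have hDapp : ∀ (s : Set (Fin d → ℝ)), MeasurableSet s →
      D s = (N : ℝ≥0∞)⁻¹ * ∑ k : Fin N, (if p k ∈ s then 1 else 0) := by
    intro s hs
    rw [hD, Measure.map_apply hpm hs, hμ0, Measure.smul_apply, smul_eq_mul]
    congr 1
    rw [Measure.count_apply (MeasurableSet.of_discrete)]
    have : p ⁻¹' s = ((Finset.univ.filter fun k => p k ∈ s : Finset (Fin N)) : Set (Fin N)) := by
      ext; simp
    rw [this, Set.encard_coe_eq_coe_finsetCard, Finset.sum_boole]
    simp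
  -- bound on rectangles spanned by two points of the support
  have hDbound : ∀ i j : Fin N, D (rectOf (p i) (p j)) ≤ 2 * (N : ℝ≥0∞)⁻¹ := by
    intro i j
    rw [hDapp _ (measurableSet_rectOf _ _)]
    have hsum : (∑ k : Fin N, (if p k ∈ rectOf (p i) (p j) then (1:ℝ≥0∞) else 0))
        ≤ ∑ k : Fin N, ((if k = i then 1 else 0) + (if k = j then 1 else 0)) := by
      refine Finset.sum_le_sum fun k _ => ?_
      by_cases hk : p k ∈ rectOf (p i) (p j)
      · rcases hgood' i j k hk with rfl | rfl
        · rw [if_pos hk, if_pos rfl]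
          exact le_self_add
        · rw [if_pos hk, if_pos rfl]
          exact le_add_self
      · simp [hk]
    have hsum2 : (∑ k : Fin N, ((if k = i then (1:ℝ≥0∞) else 0) + (if k = j then 1 else 0)))
        = 2 := by
      rw [Finset.sum_add_distrib, Finset.sum_ite_eq' Finset.univ i (fun _ => (1:ℝ≥0∞)),
        Finset.sum_ite_eq' Finset.univ j (fun _ => (1:ℝ≥0∞))]
      simp
      norm_num
    calc (N : ℝ≥0∞)⁻¹ * ∑ k : Fin N, (if p k ∈ rectOf (p i) (p j) then 1 else 0)
        ≤ (N : ℝ≥0∞)⁻¹ * 2 := by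
          exact mul_le_mul_right (le_trans hsum (le_of_eq hsum2)) _
      _ = 2 * (N : ℝ≥0∞)⁻¹ := mul_comm _ _
  -- measurability of the integrand
  have hfmeas : Measurable (fun z : (Fin d → ℝ) × (Fin d → ℝ) =>
      (D (rectOf z.1 z.2)).toReal) := by
    have heq : (fun z : (Fin d → ℝ) × (Fin d → ℝ) => (D (rectOf z.1 z.2)).toReal)
        = fun z => (N : ℝ)⁻¹ * ∑ k : Fin N, (if p k ∈ rectOf z.1 z.2 then (1:ℝ) else 0) := by
      funext z
      rw [hDapp _ (measurableSet_rectOf _ _), ENNReal.toReal_mul,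
        ENNReal.toReal_sum (fun k _ => by split <;> simp)]
      simp only [ENNReal.toReal_inv, ENNReal.toReal_natCast]
      congr 1
      refine Finset.sum_congr rfl fun k _ => ?_
      split <;> simp
    rw [heq]
    refine Measurable.const_mul ?_ _
    refine Finset.measurable_sum _ fun k _ => ?_
    have hSk : MeasurableSet {z : (Fin d → ℝ) × (Fin d → ℝ) | p k ∈ rectOf z.1 z.2} := by
      have : {z : (Fin d → ℝ) × (Fin d → ℝ) | p k ∈ rectOf z.1 z.2}
          = ⋂ i, ({z : (Fin d → ℝ) × (Fin d → ℝ) | min (z.1 i) (z.2 i) ≤ p k i}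
            ∩ {z | p k i ≤ max (z.1 i) (z.2 i)}) := by
        ext z
        simp [rectOf, Set.mem_iInter, forall_and]
      rw [this]
      refine MeasurableSet.iInter fun i => MeasurableSet.inter ?_ ?_
      · exact measurableSet_le (Measurable.min (measurable_fst.eval) (measurable_snd.eval))
          measurable_const
      · exact measurableSet_le measurable_const
          (Measurable.max (measurable_fst.eval) (measurable_snd.eval))
    exact Measurable.ite hSk measurable_const measurable_const
  -- rewrite the double integral as a finite sum
  have hprod : D.prod D = (μ0.prod μ0).map (Prod.map p p) :=
    Measure.map_prod_map μ0 μ0 hpm hpm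
  rw [hprod, integral_map (hpm.prodMap hpm).aemeasurable
    (by rw [← hprod]; exact hfmeas.aestronglyMeasurable)]
  rw [integral_fintype (Integrable.of_finite)]
  simp only [Measure.real_def]
  -- evaluate and bound the sum
  have hweight : ∀ x : Fin N × Fin N,
      ((μ0.prod μ0) {x}).toReal = (N : ℝ)⁻¹ * (N : ℝ)⁻¹ := by
    intro x
    have : ({x} : Set (Fin N × Fin N)) = {x.1} ×ˢ {x.2} := by
      rw [Set.singleton_prod_singleton]
    rw [this, Measure.prod_prod, hμ0, Measure.smul_apply, Measure.count_singleton,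
      Measure.smul_apply, Measure.count_singleton]
    simp [ENNReal.toReal_mul, ENNReal.toReal_inv]
  have hterm : ∀ x : Fin N × Fin N,
      ((μ0.prod μ0) {x}).toReal • (D (rectOf (Prod.map p p x).1 (Prod.map p p x).2)).toReal
        ≤ (N : ℝ)⁻¹ * (N : ℝ)⁻¹ * (2 * (N : ℝ)⁻¹) := by
    intro x
    rw [smul_eq_mul, hweight x]
    have h1 : (D (rectOf (p x.1) (p x.2))).toReal ≤ 2 * (N : ℝ)⁻¹ := by
      have := ENNReal.toReal_mono (by finiteness) (hDbound x.1 x.2)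
      rwa [ENNReal.toReal_mul, ENNReal.toReal_inv, ENNReal.toReal_natCast,
        ENNReal.toReal_ofNat] at this
    have h2 : (0:ℝ) ≤ (N : ℝ)⁻¹ * (N : ℝ)⁻¹ := by positivity
    exact mul_le_mul_of_nonneg_left h1 h2
  calc (∑ x : Fin N × Fin N, ((μ0.prod μ0) {x}).toReal
        • (D (rectOf (Prod.map p p x).1 (Prod.map p p x).2)).toReal)
      ≤ ∑ _x : Fin N × Fin N, (N : ℝ)⁻¹ * (N : ℝ)⁻¹ * (2 * (N : ℝ)⁻¹) :=
        Finset.sum_le_sum fun x _ => hterm x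
    _ = ((N : ℝ) * (N : ℝ)) * ((N : ℝ)⁻¹ * (N : ℝ)⁻¹ * (2 * (N : ℝ)⁻¹)) := by
        rw [Finset.sum_const, Finset.card_univ, Fintype.card_prod, Fintype.card_fin,
          nsmul_eq_mul, Nat.cast_mul]
    _ = 2 / (N : ℝ) := by
        have harith : ∀ x : ℝ, x ≠ 0 → (x * x) * (x⁻¹ * x⁻¹ * (2 * x⁻¹)) = 2 / x := by
          intro x hx; field_simp
        exact harith _ (Nat.cast_ne_zero.mpr (by omega))
    _ ≤ 2 / (2 : ℝ) ^ (2 ^ (d - 1)) := by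
        have hcast : ((N : ℕ) : ℝ) = (2 : ℝ) ^ (2 ^ (d - 1)) := by
          rw [hN]; push_cast; ring
        rw [hcast]

end final
end

section
/- Let S ⊂ ℝ^d be a finite set of points. If |S| ≥ 2^(2^(d−1)) + 1, then there exist three pairwise distinct points x, y, z ∈ S such that z ∈ R_{x,y}. Furthermore, there exists a set S ⊂ ℝ^d of size exactly 2^(2^(d−1)) such that no three pairwise distinct points x, y, z ∈ S satisfy z ∈ R_{x,y}. -/
namespace ESRect

/-- little-endian value of the first `n` bits of `u` -/
def bval (u : ℕ → Bool) : ℕ → ℕ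
  | 0 => 0
  | n+1 => Nat.bit (u 0) (bval (fun k => u (k+1)) n)

theorem testBit_bval (u : ℕ → Bool) (n t : ℕ) :
    (bval u n).testBit t = if t < n then u t else false := by
  induction n generalizing u t with
  | zero => simp [bval]
  | succ n ih =>
    cases t with
    | zero => simp [bval, Nat.testBit_bit_zero]
    | succ t =>
      simp [bval, Nat.testBit_bit_succ, ih, Nat.succ_lt_succ_iff]

end ESRect

namespace ESRect

def mask (d : ℕ) (i : Fin d) (j : ℕ) : Bool :=
  if (i : ℕ) = 0 then false else Nat.testBit j ((i : ℕ) - 1)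

noncomputable def pt (d m : ℕ) (w : Fin m → Bool) (i : Fin d) : ℝ :=
  (bval (fun k => xor (if h : k < m then w ⟨k, h⟩ else false) (mask d i k)) m : ℕ)

theorem pt_lt_iff {d m : ℕ} (w w' : Fin m → Bool) (j : Fin m)
    (hne : w j ≠ w' j) (hagree : ∀ k, j < k → w k = w' k) (i : Fin d) :
    pt d m w i < pt d m w' i ↔ xor (w j) (mask d i (j : ℕ)) = false := by
  set u : ℕ → Bool := fun k => xor (if h : k < m then w ⟨k, h⟩ else false) (mask d i k) with hu
  set u' : ℕ → Bool := fun k => xor (if h : k < m then w' ⟨k, h⟩ else false) (mask d i k) with hu'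
  have hkey : ∀ t, (j : ℕ) < t → (bval u m).testBit t = (bval u' m).testBit t := by
    intro t ht
    simp only [testBit_bval]
    split_ifs with h
    · have : w ⟨t, h⟩ = w' ⟨t, h⟩ := hagree ⟨t, h⟩ ht
      simp [hu, hu', h, this]
    · rfl
  have hjlt : (j : ℕ) < m := j.2
  have haj : (bval u m).testBit (j : ℕ) = xor (w j) (mask d i (j : ℕ)) := by
    simp [testBit_bval, hjlt, hu]
  have haj' : (bval u' m).testBit (j : ℕ) = !(xor (w j) (mask d i (j : ℕ))) := by
    have : w' j = !(w j) := by
      cases h1 : w j <;> cases h2 : w' j <;> simp_all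
    simp [testBit_bval, hjlt, hu', this]
  constructor
  · intro hlt
    by_contra hx
    have hx' : xor (w j) (mask d i (j : ℕ)) = true := by
      cases h : xor (w j) (mask d i (j : ℕ)) <;> simp_all
    have : bval u' m < bval u m := by
      refine Nat.lt_of_testBit (j : ℕ) ?_ ?_ (fun t ht => (hkey t ht).symm)
      · rw [haj', hx']; rfl
      · rw [haj, hx']
    have : pt d m w' i < pt d m w i := by
      unfold pt; exact_mod_cast this
    exact absurd hlt (not_lt.mpr this.le)
  · intro hx
    have : bval u m < bval u' m := by
      refine Nat.lt_of_testBit (j : ℕ) ?_ ?_ hkey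
      · rw [haj, hx]
      · rw [haj', hx]; rfl
    unfold pt; exact_mod_cast this

theorem pt_lt_or_lt {d m : ℕ} (w w' : Fin m → Bool) (j : Fin m)
    (hne : w j ≠ w' j) (hagree : ∀ k, j < k → w k = w' k) (i : Fin d) :
    pt d m w i < pt d m w' i ∨ pt d m w' i < pt d m w i := by
  cases h : xor (w j) (mask d i (j : ℕ)) with
  | false => exact Or.inl ((pt_lt_iff w w' j hne hagree i).mpr h)
  | true =>
    right
    refine (pt_lt_iff w' w j (Ne.symm hne) (fun k hk => (hagree k hk).symm) i).mpr ?_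
    have : w' j = !(w j) := by cases h1 : w j <;> cases h2 : w' j <;> simp_all
    rw [this]
    cases h1 : w j <;> cases h2 : mask d i (j : ℕ) <;> simp_all

end ESRect

namespace ESRect

/-- largest index where two distinct bit strings differ, with its properties -/
theorem exists_maxdiff {m : ℕ} {w w' : Fin m → Bool} (h : w ≠ w') :
    ∃ j : Fin m, w j ≠ w' j ∧ ∀ k, j < k → w k = w' k := by
  classical
  have hne : (Finset.univ.filter (fun k => w k ≠ w' k)).Nonempty := by
    rw [Finset.filter_nonempty_iff]
    obtain ⟨k, hk⟩ := Function.ne_iff.mp h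
    exact ⟨k, Finset.mem_univ k, hk⟩
  set j := Finset.max' _ hne with hj
  have hjmem := Finset.max'_mem _ hne
  rw [Finset.mem_filter] at hjmem
  refine ⟨j, hjmem.2, fun k hk => ?_⟩
  by_contra hx
  have : k ≤ j := Finset.le_max' _ k (Finset.mem_filter.mpr ⟨Finset.mem_univ k, hx⟩)
  exact absurd hk (not_lt.mpr this)

theorem no_triple {d m : ℕ} (hd : 1 ≤ d) (hm : m ≤ 2 ^ (d - 1))
    (w1 w2 w3 : Fin m → Bool) (h13 : w1 ≠ w3) (h32 : w3 ≠ w2) :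
    pt d m w3 ∉ rectOf (pt d m w1) (pt d m w2) := by
  intro hz
  obtain ⟨j1, hj1ne, hj1agree⟩ := exists_maxdiff h13
  obtain ⟨j2, hj2ne, hj2agree⟩ := exists_maxdiff h32
  -- per-coordinate: strictly between
  have hiff : ∀ i : Fin d,
      (xor (w1 j1) (mask d i (j1 : ℕ)) = false ↔ xor (w3 j2) (mask d i (j2 : ℕ)) = false) := by
    intro i
    have h1 := pt_lt_iff w1 w3 j1 hj1ne hj1agree i
    have h2 := pt_lt_iff w3 w2 j2 hj2ne hj2agree i
    have hor1 := pt_lt_or_lt w1 w3 j1 hj1ne hj1agree i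
    have hor2 := pt_lt_or_lt w3 w2 j2 hj2ne hj2agree i
    have hmem := hz i
    rw [← h1, ← h2]
    constructor
    · intro hlt13
      rcases hor2 with h | h
      · exact h
      · exfalso
        rcases le_total (pt d m w1 i) (pt d m w2 i) with hh | hh
        · have := hmem.2
          rw [max_eq_right hh] at this
          linarith
        · have := hmem.2
          rw [max_eq_left hh] at this
          linarith
    · intro hlt32
      rcases hor1 with h | h
      · exact h
      · exfalso
        rcases le_total (pt d m w1 i) (pt d m w2 i) with hh | hh
        · have := hmem.1
          rw [min_eq_left hh] at this
          linarith
        · have := hmem.1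
          rw [min_eq_right hh] at this
          linarith
  -- coordinate 0 : w1 j1 = w3 j2
  have h0 := hiff ⟨0, hd⟩
  simp only [mask] at h0
  norm_num at h0
  have hs : w1 j1 = w3 j2 := by
    cases h1 : w1 j1 <;> cases h2 : w3 j2 <;> simp_all
  -- coordinates t+1 : bits of j1 and j2 agree
  have hbits : ∀ t, t < d - 1 → Nat.testBit (j1 : ℕ) t = Nat.testBit (j2 : ℕ) t := by
    intro t ht
    have hi : t + 1 < d := by omega
    have h := hiff ⟨t + 1, hi⟩
    simp only [mask] at h
    norm_num at h
    rw [hs] at h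
    cases h1 : w3 j2 <;> cases h2 : Nat.testBit (j1 : ℕ) t <;>
      cases h3 : Nat.testBit (j2 : ℕ) t <;> simp_all
  have hj12 : j1 = j2 := by
    apply Fin.ext
    apply Nat.eq_of_testBit_eq
    intro t
    by_cases ht : t < d - 1
    · exact hbits t ht
    · have hle : (2 : ℕ) ^ (d - 1) ≤ 2 ^ t := Nat.pow_le_pow_right (by norm_num) (by omega)
      rw [Nat.testBit_eq_false_of_lt (lt_of_lt_of_le j1.2 (le_trans hm hle)),
        Nat.testBit_eq_false_of_lt (lt_of_lt_of_le j2.2 (le_trans hm hle))]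
  rw [hj12] at hj1ne hs
  exact hj1ne hs

end ESRect

namespace ESRect

theorem pt_injective (d m : ℕ) (hd : 1 ≤ d) : Function.Injective (pt d m) := by
  intro w w' h
  by_contra hne
  obtain ⟨j, hj, hagree⟩ := exists_maxdiff hne
  rcases pt_lt_or_lt w w' j hj hagree ⟨0, hd⟩ with hlt | hlt <;>
    rw [h] at hlt <;> exact lt_irrefl _ hlt

/-! upper bound machinery -/

def sgn (d : ℕ) (σ : Fin (d - 1) → Bool) (i : Fin d) : Bool :=
  if h : (i : ℕ) = 0 then true else σ ⟨(i : ℕ) - 1, by have := i.2; omega⟩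

def rle (d : ℕ) (σ : Fin (d - 1) → Bool) (x y : Fin d → ℝ) : Prop :=
  ∀ i, if sgn d σ i = true then x i ≤ y i else y i ≤ x i

theorem rle_antisymm {d : ℕ} {σ : Fin (d - 1) → Bool} {x y : Fin d → ℝ}
    (h1 : rle d σ x y) (h2 : rle d σ y x) : x = y := by
  funext i
  have a := h1 i; have b := h2 i
  cases h : sgn d σ i <;> simp [h] at a b <;> linarith

theorem rle_chain_mem {d : ℕ} {σ : Fin (d - 1) → Bool} {x y z : Fin d → ℝ}
    (h1 : rle d σ x z) (h2 : rle d σ z y) : z ∈ rectOf x y := by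
  intro i
  have a := h1 i; have b := h2 i
  cases h : sgn d σ i <;> simp [h] at a b
  · exact ⟨le_trans (min_le_right _ _) b, le_trans a (le_max_left _ _)⟩
  · exact ⟨le_trans (min_le_left _ _) a, le_trans b (le_max_right _ _)⟩

theorem rle_total (d : ℕ) (hd : 1 ≤ d) (x y : Fin d → ℝ) :
    ∃ σ, rle d σ x y ∨ rle d σ y x := by
  classical
  rcases le_total (x ⟨0, hd⟩) (y ⟨0, hd⟩) with h | h
  · refine ⟨fun j => decide (x ⟨(j : ℕ) + 1, by have := j.2; omega⟩ ≤
      y ⟨(j : ℕ) + 1, by have := j.2; omega⟩), Or.inl ?_⟩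
    intro i
    by_cases hi : (i : ℕ) = 0
    · have : i = ⟨0, hd⟩ := Fin.ext hi
      subst this
      simp [sgn, h]
    · have hieq : (⟨(i : ℕ) - 1 + 1, by have := i.2; omega⟩ : Fin d) = i := Fin.ext (by simp; omega)
      simp only [sgn, hi, dite_false, decide_eq_true_eq]
      rw [hieq]
      split_ifs with hc
      · simpa using hc
      · linarith [not_le.mp hc]
  · refine ⟨fun j => decide (y ⟨(j : ℕ) + 1, by have := j.2; omega⟩ ≤
      x ⟨(j : ℕ) + 1, by have := j.2; omega⟩), Or.inr ?_⟩
    intro i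
    by_cases hi : (i : ℕ) = 0
    · have : i = ⟨0, hd⟩ := Fin.ext hi
      subst this
      simp [sgn, h]
    · have hieq : (⟨(i : ℕ) - 1 + 1, by have := i.2; omega⟩ : Fin d) = i := Fin.ext (by simp; omega)
      simp only [sgn, hi, dite_false, decide_eq_true_eq]
      rw [hieq]
      split_ifs with hc
      · simpa using hc
      · linarith [not_le.mp hc]

end ESRect

open ESRect
/-- **Corollary 2.11 (of De Bruijn's generalized Erdős–Szekeres theorem).**
Any set of at least `2^(2^(d−1)) + 1` points in `ℝ^d` contains three pairwise distinct
points `x, y, z` with `z ∈ R_{x,y}`; moreover, there is a set of exactly `2^(2^(d−1))`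
points containing no such triple. -/
theorem erdos_szekeres_rectangle (d : ℕ) (hd : 1 ≤ d) :
    (∀ S : Finset (Fin d → ℝ), 2 ^ 2 ^ (d - 1) + 1 ≤ S.card →
      ∃ x ∈ S, ∃ y ∈ S, ∃ z ∈ S, x ≠ y ∧ y ≠ z ∧ x ≠ z ∧ z ∈ rectOf x y) ∧
    (∃ S : Finset (Fin d → ℝ), S.card = 2 ^ 2 ^ (d - 1) ∧
      ∀ x ∈ S, ∀ y ∈ S, ∀ z ∈ S, x ≠ y → y ≠ z → x ≠ z → z ∉ rectOf x y) := by
  classical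
  constructor
  · intro S hS
    by_contra hcon
    push_neg at hcon
    set φ : (Fin d → ℝ) → ((Fin (d - 1) → Bool) → Bool) :=
      fun x σ => decide (∃ w ∈ S, w ≠ x ∧ rle d σ w x) with hφ
    have hcard : (Finset.univ : Finset ((Fin (d - 1) → Bool) → Bool)).card < S.card := by
      rw [Finset.card_univ]
      have : Fintype.card ((Fin (d - 1) → Bool) → Bool) = 2 ^ 2 ^ (d - 1) := by
        rw [Fintype.card_fun]
        simp
      omega
    obtain ⟨a, ha, b, hb, hab, hfeq⟩ :=
      Finset.exists_ne_map_eq_of_card_lt_of_maps_to hcard (fun x _ => Finset.mem_univ (φ x))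
    have key : ∀ p q, p ∈ S → q ∈ S → p ≠ q → (∃ σ, rle d σ p q) → φ p = φ q → False := by
      intro p q hp hq hpq ⟨σ, hle⟩ hpe
      have h1 : φ q σ = true := by
        simp only [hφ, decide_eq_true_eq]
        exact ⟨p, hp, hpq, hle⟩
      rw [← hpe] at h1
      simp only [hφ, decide_eq_true_eq] at h1
      obtain ⟨w, hw, hwp, hlw⟩ := h1
      have hwq : w ≠ q := by
        rintro rfl
        exact hpq (rle_antisymm hle hlw)
      exact hcon w hw q hq p hp hwq (Ne.symm hpq) hwp (rle_chain_mem hlw hle)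
    obtain ⟨σ, hσ⟩ := rle_total d hd a b
    rcases hσ with h | h
    · exact absurd hfeq (by intro hfe; exact key a b ha hb hab ⟨σ, h⟩ hfe)
    · exact absurd hfeq.symm (by intro hfe; exact key b a hb ha hab.symm ⟨σ, h⟩ hfe)
  · set m := 2 ^ (d - 1) with hm
    refine ⟨Finset.univ.image (pt d m), ?_, ?_⟩
    · rw [Finset.card_image_of_injective _ (pt_injective d m hd), Finset.card_univ]
      simp
    · intro x hx y hy z hz hxy hyz hxz
      obtain ⟨w1, _, rfl⟩ := Finset.mem_image.mp hx
      obtain ⟨w2, _, rfl⟩ := Finset.mem_image.mp hy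
      obtain ⟨w3, _, rfl⟩ := Finset.mem_image.mp hz
      exact no_triple hd (le_refl m) w1 w2 w3
        (fun h => hxz (congrArg (pt d m) h)) (fun h => hyz (congrArg (pt d m) h).symm)
end

section
/- There exist universal constants A′, c′ > 0 such that the following holds, with α_d = C₀·d²·2^(2^(d+1)) for a sufficiently large universal constant C₀. Let m < k be a power of 2, let S be a set of m + 1 points in ℝ^d no two of which share any coordinate, let G_S be its sample-point grid, and let F(G_S) be a grid covering. Let p, q be probability distributions on ℝ^d and suppose there exist k′ ≤ 3k pairwise disjoint grid-aligned rectangles R_1, …, R_{k′} with p(R_i) + q(R_i) ≤ A/k for all i and Σ_{i=1}^{k′} (p(R_i) − q(R_i))² ≥ c·(ε/4)^(2α_d)·m²/k³ (A, c as in the witnessing-rectangles guarantee). Then there exists a subset H ⊆ F(G_S) such that: (i) |H| ≤ 3k·2^d·(log₂ m)^d; (ii) (p(R) + q(R))/(log₂ m)^d ≤ A′·(log₂ m)^(−d)/k for every R ∈ H; and (iii) Σ_{R∈H} ((p(R) − q(R))/(log₂ m)^d)² ≥ c′·2^(−d)·(log₂ k)^(−3d)·(ε/4)^(2α_d)·m²/k³.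 -/
open MeasureTheory
open scoped Classical

/-- A half-open grid-aligned rectangle with respect to the points `s`. -/
def GridAlignedIco {d n : ℕ} (s : Fin n → Fin d → ℝ) (R : Set (Fin d → ℝ)) : Prop :=
  ∃ a b : Fin d → Fin n,
    R = {z | ∀ l, s (a l) l ≤ z l ∧ z l < s (b l) l}

/-- The (half-open) bounding rectangle of the points `s`. -/
noncomputable def boundingBox {d m : ℕ} (s : Fin (m + 1) → Fin d → ℝ) :
    Set (Fin d → ℝ) :=
  {z | ∀ l, (Finset.univ.inf' Finset.univ_nonempty fun j => s j l) ≤ z l ∧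
            z l < Finset.univ.sup' Finset.univ_nonempty fun j => s j l}

/-- `F` is a grid covering for the sample points `s` (with `m = 2^t`): every member is
grid-aligned, every grid-aligned rectangle inside the bounding box is a union of at most
`2^d·t^d` pairwise disjoint members of `F`, and every point of the bounding box lies in
exactly `t^d` members of `F`. -/
def IsGridCovering {d t : ℕ} (s : Fin (2 ^ t + 1) → Fin d → ℝ)
    (F : Finset (Set (Fin d → ℝ))) : Prop :=
  (∀ R ∈ F, GridAlignedIco s R) ∧
  (∀ R : Set (Fin d → ℝ), GridAlignedIco s R → R ⊆ boundingBox s →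
    ∃ G ⊆ F, G.card ≤ 2 ^ d * t ^ d ∧
      ((G : Set (Set (Fin d → ℝ))).Pairwise fun A B => Disjoint A B) ∧
      ⋃₀ (G : Set (Set (Fin d → ℝ))) = R) ∧
  (∀ z ∈ boundingBox s, (F.filter fun R => z ∈ R).card = t ^ d)

/-- **Lemma 2.7: discrepancy of the induced distributions on a grid covering.**
For all constants `A, c, C₀ > 0` (with `α_d = C₀·d²·2^(2^(d+1))`) there exist constants
`A', c' > 0` such that: whenever `m = 2^t < k`, `S` is a set of `m + 1` points no two
sharing a coordinate, `F` is a grid covering for `S`, and there exist `k' ≤ 3k` pairwise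
disjoint grid-aligned rectangles `R_1, …, R_{k'}` with `p(R_i) + q(R_i) ≤ A/k` and
`Σ_i (p(R_i) − q(R_i))² ≥ c·(ε/4)^(2α_d)·m²/k³`, then there is a subset `H ⊆ F` with
`|H| ≤ 3k·2^d·t^d`, with `(p(R)+q(R))/t^d ≤ A'·t^(−d)/k` for all `R ∈ H`
(these are the masses assigned by the induced distributions `p^F, q^F`), and with
`Σ_{R∈H} ((p(R)−q(R))/t^d)² ≥ c'·2^(−d)·(log₂ k)^(−3d)·(ε/4)^(2α_d)·m²/k³`. -/
theorem induced_distribution_discrepancy :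
    ∀ A c C₀ : ℝ, 0 < A → 0 < c → 0 < C₀ →
    ∃ A' c' : ℝ, 0 < A' ∧ 0 < c' ∧
      ∀ (d k t : ℕ), 1 ≤ d → 1 ≤ t → 2 ^ t < k →
      ∀ ε : ℝ, 0 < ε → ε ≤ 1 →
      ∀ s : Fin (2 ^ t + 1) → Fin d → ℝ,
        (∀ i j, i ≠ j → ∀ l, s i l ≠ s j l) →
      ∀ F : Finset (Set (Fin d → ℝ)), IsGridCovering s F →
      ∀ p q : Measure (Fin d → ℝ),
        IsProbabilityMeasure p → IsProbabilityMeasure q →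
      ∀ k' : ℕ, k' ≤ 3 * k →
      ∀ R : Fin k' → Set (Fin d → ℝ),
        (∀ i, GridAlignedIco s (R i)) →
        (Pairwise fun i j => Disjoint (R i) (R j)) →
        (∀ i, (p (R i)).toReal + (q (R i)).toReal ≤ A / k) →
        c * (ε / 4) ^ (2 * (C₀ * (d : ℝ) ^ 2 * (2 : ℝ) ^ (2 ^ (d + 1)))) *
            ((2 : ℝ) ^ t) ^ 2 / (k : ℝ) ^ 3 ≤
          ∑ i, ((p (R i)).toReal - (q (R i)).toReal) ^ 2 →
      ∃ H ⊆ F,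
        H.card ≤ 3 * k * 2 ^ d * t ^ d ∧
        (∀ Q ∈ H, ((p Q).toReal + (q Q).toReal) / (t : ℝ) ^ d ≤
          A' * ((t : ℝ) ^ d)⁻¹ / k) ∧
        c' * ((2 : ℝ) ^ d)⁻¹ * (((Nat.log 2 k : ℝ)) ^ (3 * d))⁻¹ *
            (ε / 4) ^ (2 * (C₀ * (d : ℝ) ^ 2 * (2 : ℝ) ^ (2 ^ (d + 1)))) *
            ((2 : ℝ) ^ t) ^ 2 / (k : ℝ) ^ 3 ≤
          ∑ Q ∈ H, (((p Q).toReal - (q Q).toReal) / (t : ℝ) ^ d) ^ 2 := by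
  intro A c C₀ hA hc hC₀
  refine ⟨A, c, hA, hc, ?_⟩
  intro d k t hd ht hk ε hε hε1 s hs F hF p q hp hq k' hk' R hga hdisj hmass hsum
  obtain ⟨hF1, hF2, hF3⟩ := hF
  have hk0 : 0 < k := lt_of_le_of_lt (Nat.zero_le _) hk
  -- measurability of grid-aligned sets
  have hmeas : ∀ Q : Set (Fin d → ℝ), GridAlignedIco s Q → MeasurableSet Q := by
    rintro Q ⟨a, b, rfl⟩
    have : {z : Fin d → ℝ | ∀ l, s (a l) l ≤ z l ∧ z l < s (b l) l}
        = ⋂ l, (fun z : Fin d → ℝ => z l) ⁻¹' Set.Ico (s (a l) l) (s (b l) l) := by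
      ext z; simp [Set.mem_iInter, Set.mem_Ico]
    rw [this]
    exact MeasurableSet.iInter fun l => (measurable_pi_apply l) measurableSet_Ico
  -- grid-aligned sets lie in the bounding box
  have hbb : ∀ Q : Set (Fin d → ℝ), GridAlignedIco s Q → Q ⊆ boundingBox s := by
    rintro Q ⟨a, b, rfl⟩ z hz l
    exact ⟨le_trans (Finset.inf'_le _ (Finset.mem_univ (a l))) (hz l).1,
      lt_of_lt_of_le (hz l).2 (Finset.le_sup' (fun j => s j l) (Finset.mem_univ (b l)))⟩
  choose G hGF hGcard hGdisj hGunion using fun i => hF2 (R i) (hga i) (hbb _ (hga i))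
  set H := Finset.univ.biUnion G with hH
  have hHF : H ⊆ F := Finset.biUnion_subset.mpr fun i _ => hGF i
  have hsubR : ∀ i, ∀ Q ∈ G i, Q ⊆ R i := by
    intro i Q hQ
    rw [← hGunion i]
    exact Set.subset_sUnion_of_mem hQ
  have ht1 : (1 : ℝ) ≤ (t : ℝ) := by exact_mod_cast ht
  have htd : (0 : ℝ) < (t : ℝ) ^ d := by positivity
  refine ⟨H, hHF, ?_, ?_, ?_⟩
  · -- cardinality bound
    calc H.card ≤ ∑ i : Fin k', (G i).card := Finset.card_biUnion_le
      _ ≤ ∑ _i : Fin k', 2 ^ d * t ^ d := Finset.sum_le_sum fun i _ => hGcard i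
      _ = k' * (2 ^ d * t ^ d) := by simp [Finset.sum_const, mul_comm]
      _ ≤ 3 * k * (2 ^ d * t ^ d) := by
          exact Nat.mul_le_mul_right _ hk'
      _ = 3 * k * 2 ^ d * t ^ d := by ring
  · -- mass bound
    intro Q hQ
    obtain ⟨i, -, hQi⟩ := Finset.mem_biUnion.mp hQ
    have hsub := hsubR i Q hQi
    have h1 : (p Q).toReal ≤ (p (R i)).toReal :=
      ENNReal.toReal_mono (measure_ne_top p _) (measure_mono hsub)
    have h2 : (q Q).toReal ≤ (q (R i)).toReal :=
      ENNReal.toReal_mono (measure_ne_top q _) (measure_mono hsub)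
    have h3 : (p Q).toReal + (q Q).toReal ≤ A / k :=
      le_trans (add_le_add h1 h2) (hmass i)
    have : ((p Q).toReal + (q Q).toReal) / (t : ℝ) ^ d ≤ (A / k) / (t : ℝ) ^ d := by
      exact div_le_div_of_nonneg_right h3 htd.le
    calc ((p Q).toReal + (q Q).toReal) / (t : ℝ) ^ d ≤ (A / k) / (t : ℝ) ^ d := this
      _ = A * ((t : ℝ) ^ d)⁻¹ / k := by ring
  · -- discrepancy bound
    set f : Set (Fin d → ℝ) → ℝ := fun Q => (p Q).toReal - (q Q).toReal with hf
    have hadd : ∀ i, f (R i) = ∑ Q ∈ G i, f Q := by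
      intro i
      have hmQ : ∀ Q ∈ G i, MeasurableSet Q := fun Q hQ => hmeas Q (hF1 Q (hGF i hQ))
      have hU : R i = ⋃ Q ∈ G i, Q := by
        rw [← hGunion i, Set.sUnion_eq_biUnion]; simp
      have hpd : p (R i) = ∑ Q ∈ G i, p Q := by
        rw [hU]; exact measure_biUnion_finset (hGdisj i) hmQ
      have hqd : q (R i) = ∑ Q ∈ G i, q Q := by
        rw [hU]; exact measure_biUnion_finset (hGdisj i) hmQ
      simp only [hf, hpd, hqd,
        ENNReal.toReal_sum (fun Q _ => measure_ne_top p Q),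
        ENNReal.toReal_sum (fun Q _ => measure_ne_top q Q),
        Finset.sum_sub_distrib]
    -- Cauchy–Schwarz on each piece
    have hCS : ∀ i : Fin k', (f (R i)) ^ 2 ≤ (2 ^ d * t ^ d : ℝ) * ∑ Q ∈ G i, f Q ^ 2 := by
      intro i
      rw [hadd i]
      calc (∑ Q ∈ G i, f Q) ^ 2 ≤ ((G i).card : ℝ) * ∑ Q ∈ G i, f Q ^ 2 :=
            sq_sum_le_card_mul_sum_sq
        _ ≤ (2 ^ d * t ^ d : ℝ) * ∑ Q ∈ G i, f Q ^ 2 := by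
            apply mul_le_mul_of_nonneg_right _ (Finset.sum_nonneg fun Q _ => sq_nonneg _)
            exact_mod_cast hGcard i
    -- dedup: sum over pieces bounded by sum over H
    set G' : Fin k' → Finset (Set (Fin d → ℝ)) := fun i => (G i).erase ∅ with hG'
    have hGsum : ∀ i, ∑ Q ∈ G i, f Q ^ 2 = ∑ Q ∈ G' i, f Q ^ 2 := by
      intro i
      simp only [hG']
      by_cases h : ∅ ∈ G i
      · rw [← Finset.add_sum_erase _ _ h]
        simp [hf]
      · rw [Finset.erase_eq_of_notMem h]
    have hG'disj : ∀ i j : Fin k', i ≠ j → Disjoint (G' i) (G' j) := by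
      intro i j hij
      rw [Finset.disjoint_left]
      intro Q hQi hQj
      have h1 : Q ⊆ R i := hsubR i Q (Finset.mem_of_mem_erase hQi)
      have h2 : Q ⊆ R j := hsubR j Q (Finset.mem_of_mem_erase hQj)
      have : Q = ∅ := Set.eq_empty_of_subset_empty
        ((Set.subset_inter h1 h2).trans (Set.disjoint_iff_inter_eq_empty.mp (hdisj hij)).le)
      exact (Finset.ne_of_mem_erase hQi) this
    have hkey : ∑ i : Fin k', ∑ Q ∈ G i, f Q ^ 2 ≤ ∑ Q ∈ H, f Q ^ 2 := by
      have heq : ∑ i : Fin k', ∑ Q ∈ G' i, f Q ^ 2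
          = ∑ Q ∈ Finset.univ.biUnion G', f Q ^ 2 :=
        (Finset.sum_biUnion fun i _ j _ hij => hG'disj i j hij).symm
      have hsubH : Finset.univ.biUnion G' ⊆ H :=
        Finset.biUnion_subset.mpr fun i _ =>
          ((G i).erase_subset ∅).trans (Finset.subset_biUnion_of_mem G (Finset.mem_univ i))
      calc ∑ i : Fin k', ∑ Q ∈ G i, f Q ^ 2 = ∑ i : Fin k', ∑ Q ∈ G' i, f Q ^ 2 := by
            simp_rw [hGsum]
        _ = ∑ Q ∈ Finset.univ.biUnion G', f Q ^ 2 := heq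
        _ ≤ ∑ Q ∈ H, f Q ^ 2 :=
            Finset.sum_le_sum_of_subset_of_nonneg hsubH fun Q _ _ => sq_nonneg _
    -- assemble
    set α : ℝ := (ε / 4) ^ (2 * (C₀ * (d : ℝ) ^ 2 * (2 : ℝ) ^ (2 ^ (d + 1)))) with hα
    have hα0 : 0 < α := Real.rpow_pos_of_pos (by linarith) _
    have hk0' : (0:ℝ) < (k:ℝ) := by exact_mod_cast hk0
    set M : ℝ := ((2:ℝ) ^ t) ^ 2 with hM
    have hM0 : (0:ℝ) < M := by positivity
    have htL : (t : ℝ) ≤ (Nat.log 2 k : ℝ) := by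
      exact_mod_cast (Nat.le_log_iff_pow_le (by norm_num) (by omega)).mpr hk.le
    set S₂ : ℝ := ∑ Q ∈ H, f Q ^ 2 with hS₂def
    have hS₂0 : 0 ≤ S₂ := Finset.sum_nonneg fun Q _ => sq_nonneg _
    set T : ℝ := (t:ℝ) ^ d with hT
    set D : ℝ := (2:ℝ) ^ d with hD
    have hT0 : (0:ℝ) < T := htd
    have hD0 : (0:ℝ) < D := by rw [hD]; positivity
    have hS₁ : c * α * M ≤ D * T * S₂ * (k : ℝ) ^ 3 := by
      rw [← div_le_iff₀ (by positivity)]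
      calc c * α * M / (k : ℝ) ^ 3 ≤ ∑ i : Fin k', f (R i) ^ 2 := hsum
        _ ≤ ∑ i : Fin k', D * T * ∑ Q ∈ G i, f Q ^ 2 :=
            Finset.sum_le_sum fun i _ => hCS i
        _ = D * T * ∑ i : Fin k', ∑ Q ∈ G i, f Q ^ 2 := by
            rw [Finset.mul_sum]
        _ ≤ D * T * S₂ := mul_le_mul_of_nonneg_left hkey (by positivity)
    have hrw : ∑ Q ∈ H, (f Q / T) ^ 2 = S₂ / T ^ 2 := by
      rw [hS₂def, Finset.sum_div]
      exact Finset.sum_congr rfl fun Q _ => by rw [div_pow]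
    rw [hrw]
    have hT3 : ((t:ℝ)) ^ (3 * d) = T ^ 3 := by rw [hT, mul_comm, pow_mul]
    have hL3 : T ^ 3 ≤ ((Nat.log 2 k : ℝ)) ^ (3 * d) := by
      rw [← hT3]
      exact pow_le_pow_left₀ (by positivity) htL _
    have hT30 : (0:ℝ) < T ^ 3 := by positivity
    have step1 : c * D⁻¹ * (((Nat.log 2 k : ℝ)) ^ (3 * d))⁻¹ * α * M / (k : ℝ) ^ 3
        ≤ c * D⁻¹ * (T ^ 3)⁻¹ * α * M / (k : ℝ) ^ 3 := by
      have hinv : (((Nat.log 2 k : ℝ)) ^ (3 * d))⁻¹ ≤ (T ^ 3)⁻¹ :=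
        inv_anti₀ hT30 hL3
      apply div_le_div_of_nonneg_right _ (by positivity : (0:ℝ) ≤ (k:ℝ) ^ 3)
      have h1 := mul_le_mul_of_nonneg_left hinv (le_of_lt (mul_pos hc (by positivity : (0:ℝ) < D⁻¹)))
      exact mul_le_mul_of_nonneg_right (mul_le_mul_of_nonneg_right h1 hα0.le) hM0.le
    refine step1.trans ?_
    rw [div_le_div_iff₀ (by positivity) (by positivity)]
    have e1 : D * D⁻¹ = 1 := mul_inv_cancel₀ hD0.ne'
    have e2 : T * T ^ 2 * (T ^ 3)⁻¹ = 1 := by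
      rw [show T * T ^ 2 = T ^ 3 by ring, mul_inv_cancel₀ hT30.ne']
    calc c * D⁻¹ * (T ^ 3)⁻¹ * α * M * T ^ 2
        = (c * α * M) * (T ^ 2 * (T ^ 3)⁻¹ * D⁻¹) := by ring
      _ ≤ (D * T * S₂ * (k : ℝ) ^ 3) * (T ^ 2 * (T ^ 3)⁻¹ * D⁻¹) :=
          mul_le_mul_of_nonneg_right hS₁ (by positivity)
      _ = S₂ * (k : ℝ) ^ 3 * (D * D⁻¹) * (T * T ^ 2 * (T ^ 3)⁻¹) := by ring
      _ = S₂ * (k : ℝ) ^ 3 := by rw [e1, e2]; ring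
end
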